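/- arXiv:2212.12216 — 3 statements merged into one kernel-verified Lean document; each statement's English description precedes it below -/
import Mathlib

section
/- Let ν₁, ν₂, γ₁, γ₂ > 0, set t = √(ν₁/ν₂) and η = √(γ₁/γ₂), and let λ₀ = √(γ₁γ₂/(ν₁ν₂)). Then ω(λ₀) = t²((η - 1/t)/(η + t))², where ω(λ) = -((γ₁ - ν₂λ)/(γ₁ + ν₁λ))·((γ₂ - ν₁λ)/(γ₂ + ν₂λ)). Moreover, if η > 1/t, then 0 < ω(λ₀) < t² = ν₁/ν₂. -/
/-!
With a = √ν₁, b = √ν₂, g = √γ₁, h = √γ₂ we have λ₀ = gh/(ab), and the two factors of ω(λ₀)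
become (b/a)·q and -(a/b)·q for q = (ga - hb)/(gb + ha) = t(η - 1/t)/(η + t), so ω(λ₀) = q².
When tη > 1 the ratio (η - 1/t)/(η + t) lies in (0, 1), whence 0 < q² < t².
-/

lemma neg_robin_product_at_sqrt {ν₁ ν₂ γ₁ γ₂ : ℝ} (h1 : 0 < ν₁) (h2 : 0 < ν₂)
    (hg1 : 0 < γ₁) (hg2 : 0 < γ₂) :
    -((γ₁ - ν₂ * Real.sqrt (γ₁ * γ₂ / (ν₁ * ν₂))) / (γ₁ + ν₁ * Real.sqrt (γ₁ * γ₂ / (ν₁ * ν₂)))) *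
        ((γ₂ - ν₁ * Real.sqrt (γ₁ * γ₂ / (ν₁ * ν₂))) /
          (γ₂ + ν₂ * Real.sqrt (γ₁ * γ₂ / (ν₁ * ν₂)))) =
      Real.sqrt (ν₁ / ν₂) ^ 2 * ((Real.sqrt (γ₁ / γ₂) - 1 / Real.sqrt (ν₁ / ν₂)) /
        (Real.sqrt (γ₁ / γ₂) + Real.sqrt (ν₁ / ν₂))) ^ 2 := by
  obtain ⟨a, ha, rfl⟩ : ∃ a, 0 < a ∧ a ^ 2 = ν₁ := ⟨√ν₁, by positivity, Real.sq_sqrt h1.le⟩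
  obtain ⟨b, hb, rfl⟩ : ∃ b, 0 < b ∧ b ^ 2 = ν₂ := ⟨√ν₂, by positivity, Real.sq_sqrt h2.le⟩
  obtain ⟨g, hg, rfl⟩ : ∃ g, 0 < g ∧ g ^ 2 = γ₁ := ⟨√γ₁, by positivity, Real.sq_sqrt hg1.le⟩
  obtain ⟨h, hh, rfl⟩ : ∃ h, 0 < h ∧ h ^ 2 = γ₂ := ⟨√γ₂, by positivity, Real.sq_sqrt hg2.le⟩
  have hlam₀ : Real.sqrt (g ^ 2 * h ^ 2 / (a ^ 2 * b ^ 2)) = g * h / (a * b) := by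
    rw [show g ^ 2 * h ^ 2 / (a ^ 2 * b ^ 2) = (g * h / (a * b)) ^ 2 by ring]
    exact Real.sqrt_sq (by positivity)
  rw [hlam₀, ← div_pow, ← div_pow, Real.sqrt_sq (by positivity), Real.sqrt_sq (by positivity)]
  have hden : g * b + h * a ≠ 0 := by positivity
  field_simp
  ring

lemma sq_mul_sq_div_mem_Ioo {t η : ℝ} (ht : 0 < t) (hη : 1 / t < η) :
    t ^ 2 * ((η - 1 / t) / (η + t)) ^ 2 ∈ Set.Ioo 0 (t ^ 2) := by
  have hden : 0 < η + t := by linarith [one_div_pos.mpr ht]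
  have hr_pos : 0 < (η - 1 / t) / (η + t) := div_pos (by linarith) hden
  have hr_lt_one : (η - 1 / t) / (η + t) < 1 :=
    (div_lt_one hden).mpr (by linarith [one_div_pos.mpr ht])
  refine ⟨by positivity, mul_lt_of_lt_one_right (by positivity) ?_⟩
  exact pow_lt_one₀ hr_pos.le hr_lt_one two_ne_zero

theorem stmt4 (ν₁ ν₂ γ₁ γ₂ : ℝ) (h1 : 0 < ν₁) (h2 : 0 < ν₂)
    (hg1 : 0 < γ₁) (hg2 : 0 < γ₂)
    (t η lam₀ : ℝ)
    (ht : t = Real.sqrt (ν₁ / ν₂)) (hη : η = Real.sqrt (γ₁ / γ₂))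
    (hlam₀ : lam₀ = Real.sqrt (γ₁ * γ₂ / (ν₁ * ν₂)))
    (ω : ℝ → ℝ)
    (hω : ∀ lam : ℝ, ω lam =
      -((γ₁ - ν₂ * lam) / (γ₁ + ν₁ * lam)) * ((γ₂ - ν₁ * lam) / (γ₂ + ν₂ * lam))) :
    ω lam₀ = t ^ 2 * ((η - 1 / t) / (η + t)) ^ 2 ∧
    (1 / t < η → 0 < ω lam₀ ∧ ω lam₀ < t ^ 2 ∧ t ^ 2 = ν₁ / ν₂) := by
  have hω₀ : ω lam₀ = t ^ 2 * ((η - 1 / t) / (η + t)) ^ 2 := by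
    rw [hω, hlam₀, ht, hη]
    exact neg_robin_product_at_sqrt h1 h2 hg1 hg2
  refine ⟨hω₀, fun hlt => ?_⟩
  have ht_sq : t ^ 2 = ν₁ / ν₂ := by rw [ht, Real.sq_sqrt (by positivity)]
  have ht_pos : 0 < t := by rw [ht]; positivity
  obtain ⟨hω_pos, hω_lt⟩ := hω₀ ▸ sq_mul_sq_div_mem_Ioo ht_pos hlt
  exact ⟨hω_pos, hω_lt, ht_sq⟩
end

section
/- Let V be a finite-dimensional real inner product space, let T₁, T₂ be symmetric positive definite operators on V satisfying c⟨T₂u,u⟩ ≤ ⟨T₁u,u⟩ ≤ C⟨T₂u,u⟩ for all u ∈ V, let ν₁, ν₂ > 0, and set S₁ = ν₁T₁, S₂ = ν₂T₂, δ₁ = √(ν₁)/(√ν₁+√ν₂) and δ₂ = √(ν₂)/(√ν₁+√ν₂). Then the eigenvalues of (δ₁²S₁⁻¹+δ₂²S₂⁻¹)(S₁+S₂) lie in an interval [λ_min, λ_max] with λ_max/λ_min ≤ (max{C, 1/c} + 1)/(min{1/C, c} + 1), a bound independent of ν₁ and ν₂. -/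
open scoped RealInnerProductSpace

section Aux
variable {V : Type*} [NormedAddCommGroup V] [InnerProductSpace ℝ V]

lemma key_ineq_stmt11 (A : V →ₗ[ℝ] V) (hA : LinearMap.IsSymmetric A)
    (hAnn : ∀ x : V, 0 ≤ ⟪A x, x⟫) (z v w : V) (hz : A z = w) :
    2 * ⟪w, v⟫ - ⟪A v, v⟫ ≤ ⟪w, z⟫ := by
  have h := hAnn (z - v)
  have h1 : ⟪A v, z⟫ = ⟪w, v⟫ := by rw [hA v z, hz, real_inner_comm]
  have h2 : ⟪A z, z⟫ = ⟪w, z⟫ := by rw [hz]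
  have h3 : ⟪A z, v⟫ = ⟪w, v⟫ := by rw [hz]
  have e : ⟪A (z - v), z - v⟫ = ⟪w, z⟫ - 2 * ⟪w, v⟫ + ⟪A v, v⟫ := by
    rw [map_sub, inner_sub_left, inner_sub_right, inner_sub_right, h1, h2, h3]; ring
  rw [e] at h; linarith

lemma inv_form_ge_stmt11 (T : V →ₗ[ℝ] V) (hT : LinearMap.IsSymmetric T)
    (hTnn : ∀ x : V, 0 ≤ ⟪T x, x⟫) (μ D : ℝ) (hμ : 0 ≤ μ)
    (u z w : V) (hTz : T z = w) (hwu : ⟪w, u⟫ = D) (hμD : μ * ⟪T u, u⟫ ≤ D) :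
    μ * D ≤ ⟪w, z⟫ := by
  have h := key_ineq_stmt11 T hT hTnn z (μ • u) w hTz
  simp only [map_smul, real_inner_smul_right, real_inner_smul_left, hwu] at h
  nlinarith [mul_le_mul_of_nonneg_left hμD hμ]

lemma inv_form_le_stmt11 (A T : V →ₗ[ℝ] V) (hA : LinearMap.IsSymmetric A)
    (hAnn : ∀ x : V, 0 ≤ ⟪A x, x⟫) (κ : ℝ) (hκ : 0 < κ)
    (u z w : V) (hAu : A u = w) (hTz : T z = w)
    (hAT : ⟪A z, z⟫ ≤ κ * ⟪T z, z⟫) :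
    ⟪w, z⟫ ≤ κ * ⟪w, u⟫ := by
  have h := key_ineq_stmt11 A hA hAnn u (κ⁻¹ • z) w hAu
  simp only [map_smul, real_inner_smul_right, real_inner_smul_left] at h
  -- h : 2 * (κ⁻¹ * ⟪w, z⟫) - κ⁻¹ * (κ⁻¹ * ⟪A z, z⟫) ≤ ⟪w, u⟫
  have hX : ⟪A z, z⟫ ≤ κ * ⟪w, z⟫ := by rw [← hTz]; exact hAT
  have htκ : κ⁻¹ * κ = 1 := inv_mul_cancel₀ hκ.ne'
  have hκt : κ * κ⁻¹ = 1 := mul_inv_cancel₀ hκ.ne'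
  have ht : (0:ℝ) < κ⁻¹ := inv_pos.2 hκ
  have e : κ * (2 * (κ⁻¹ * ⟪w, z⟫) - κ⁻¹ * (κ⁻¹ * ⟪A z, z⟫))
      = 2 * ⟪w, z⟫ - κ⁻¹ * ⟪A z, z⟫ := by
    linear_combination (2 * ⟪w, z⟫ - κ⁻¹ * ⟪A z, z⟫) * hκt
  have h' : 2 * ⟪w, z⟫ - κ⁻¹ * ⟪A z, z⟫ ≤ κ * ⟪w, u⟫ := by
    have hm := mul_le_mul_of_nonneg_left h hκ.le
    rw [e] at hm; exact hm
  have h'' : κ⁻¹ * ⟪A z, z⟫ ≤ ⟪w, z⟫ := by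
    have := mul_le_mul_of_nonneg_left hX ht.le
    calc κ⁻¹ * ⟪A z, z⟫ ≤ κ⁻¹ * (κ * ⟪w, z⟫) := this
      _ = ⟪w, z⟫ := by rw [← mul_assoc, htκ, one_mul]
  linarith

end Aux

theorem stmt11 {V : Type*} [NormedAddCommGroup V] [InnerProductSpace ℝ V]
    [FiniteDimensional ℝ V]
    (T₁ T₂ : V →ₗ[ℝ] V)
    (hT₁sym : LinearMap.IsSymmetric T₁) (hT₂sym : LinearMap.IsSymmetric T₂)
    (hT₁pos : ∀ u : V, u ≠ 0 → 0 < ⟪T₁ u, u⟫)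
    (hT₂pos : ∀ u : V, u ≠ 0 → 0 < ⟪T₂ u, u⟫)
    (c C : ℝ) (hc : 0 < c) (hcC : c ≤ C)
    (hbound : ∀ u : V, c * ⟪T₂ u, u⟫ ≤ ⟪T₁ u, u⟫ ∧ ⟪T₁ u, u⟫ ≤ C * ⟪T₂ u, u⟫)
    (ν₁ ν₂ : ℝ) (hν₁ : 0 < ν₁) (hν₂ : 0 < ν₂)
    (S₁ S₂ S₁inv S₂inv : V →ₗ[ℝ] V)
    (hS₁ : S₁ = ν₁ • T₁) (hS₂ : S₂ = ν₂ • T₂)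
    (hS₁i : S₁ ∘ₗ S₁inv = LinearMap.id ∧ S₁inv ∘ₗ S₁ = LinearMap.id)
    (hS₂i : S₂ ∘ₗ S₂inv = LinearMap.id ∧ S₂inv ∘ₗ S₂ = LinearMap.id)
    (δ₁ δ₂ : ℝ)
    (hδ₁ : δ₁ = Real.sqrt ν₁ / (Real.sqrt ν₁ + Real.sqrt ν₂))
    (hδ₂ : δ₂ = Real.sqrt ν₂ / (Real.sqrt ν₁ + Real.sqrt ν₂)) :
    ∃ lamMin lamMax : ℝ, 0 < lamMin ∧ lamMin ≤ lamMax ∧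
      (∀ lam : ℝ,
        Module.End.HasEigenvalue
          ((δ₁ ^ 2 • S₁inv + δ₂ ^ 2 • S₂inv) ∘ₗ (S₁ + S₂)) lam →
        lam ∈ Set.Icc lamMin lamMax) ∧
      lamMax / lamMin ≤ (max C (1 / c) + 1) / (min (1 / C) c + 1) := by
  have hC : 0 < C := lt_of_lt_of_le hc hcC
  set r : ℝ := Real.sqrt ν₁ + Real.sqrt ν₂ with hr_def
  have hr : 0 < r := add_pos (Real.sqrt_pos.2 hν₁) (Real.sqrt_pos.2 hν₂)
  have hr2 : (0:ℝ) < r ^ 2 := by positivity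
  have hd1 : δ₁ ^ 2 = ν₁ / r ^ 2 := by rw [hδ₁, div_pow, Real.sq_sqrt hν₁.le]
  have hd2 : δ₂ ^ 2 = ν₂ / r ^ 2 := by rw [hδ₂, div_pow, Real.sq_sqrt hν₂.le]
  set msml : ℝ := min (1 / C) c with hm_def
  set Msup : ℝ := max C (1 / c) with hM_def
  have hmpos : 0 < msml := lt_min (by positivity) hc
  have hmM : msml ≤ Msup := le_trans (min_le_right _ _) (le_trans hcC (le_max_left _ _))
  have hT₁nn : ∀ x : V, 0 ≤ ⟪T₁ x, x⟫ := by
    intro x; rcases eq_or_ne x 0 with h | h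
    · simp [h]
    · exact (hT₁pos x h).le
  have hT₂nn : ∀ x : V, 0 ≤ ⟪T₂ x, x⟫ := by
    intro x; rcases eq_or_ne x 0 with h | h
    · simp [h]
    · exact (hT₂pos x h).le
  have hSapply : ∀ x y : V, ⟪(S₁ + S₂) x, y⟫ = ν₁ * ⟪T₁ x, y⟫ + ν₂ * ⟪T₂ x, y⟫ := by
    intro x y
    simp [hS₁, hS₂, LinearMap.add_apply, LinearMap.smul_apply, inner_add_left,
      real_inner_smul_left]
  have hSsym : LinearMap.IsSymmetric (S₁ + S₂) := by
    intro x y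
    rw [hSapply x y]
    simp [hS₁, hS₂, LinearMap.add_apply, LinearMap.smul_apply, inner_add_right,
      real_inner_smul_right, hT₁sym x y, hT₂sym x y]
  have hSnn : ∀ x : V, 0 ≤ ⟪(S₁ + S₂) x, x⟫ := by
    intro x
    rw [hSapply x x]
    exact add_nonneg (mul_nonneg hν₁.le (hT₁nn x)) (mul_nonneg hν₂.le (hT₂nn x))
  refine ⟨(ν₁ + ν₂) * (msml + 1) / r ^ 2, (ν₁ + ν₂) * (Msup + 1) / r ^ 2, ?_, ?_, ?_, ?_⟩
  · apply div_pos (mul_pos (by linarith) (by linarith)) hr2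
  · have h : msml + 1 ≤ Msup + 1 := by linarith
    gcongr
  · intro lam hlam
    obtain ⟨u, hu⟩ := hlam.exists_hasEigenvector
    have hu0 : u ≠ 0 := hu.2
    set w : V := S₁ u + S₂ u with hwdef
    have hAu : (S₁ + S₂) u = w := by rw [hwdef, LinearMap.add_apply]
    set z₁ : V := ν₁ • S₁inv w with hz₁def
    set z₂ : V := ν₂ • S₂inv w with hz₂def
    have hz₁ : T₁ z₁ = w := by
      have h := LinearMap.ext_iff.mp hS₁i.1 w
      rw [LinearMap.comp_apply, LinearMap.id_apply] at h
      rw [hz₁def, map_smul, ← LinearMap.smul_apply, ← hS₁]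
      exact h
    have hz₂ : T₂ z₂ = w := by
      have h := LinearMap.ext_iff.mp hS₂i.1 w
      rw [LinearMap.comp_apply, LinearMap.id_apply] at h
      rw [hz₂def, map_smul, ← LinearMap.smul_apply, ← hS₂]
      exact h
    set Dv : ℝ := ν₁ * ⟪T₁ u, u⟫ + ν₂ * ⟪T₂ u, u⟫ with hDvdef
    have hwu : ⟪w, u⟫ = Dv := by
      rw [hwdef]
      simp [hS₁, hS₂, LinearMap.smul_apply, inner_add_left, real_inner_smul_left, hDvdef]
    have huw : ⟪u, w⟫ = Dv := by rw [real_inner_comm]; exact hwu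
    have hp : 0 < ⟪T₁ u, u⟫ := hT₁pos u hu0
    have hq : 0 < ⟪T₂ u, u⟫ := hT₂pos u hu0
    have hDpos : 0 < Dv := by
      rw [hDvdef]; positivity
    -- eigen identity
    have happ : ((δ₁ ^ 2 • S₁inv + δ₂ ^ 2 • S₂inv) ∘ₗ (S₁ + S₂)) u = lam • u :=
      hu.apply_eq_smul
    have happ' : δ₁ ^ 2 • S₁inv w + δ₂ ^ 2 • S₂inv w = lam • u := by
      rw [← happ]
      simp [LinearMap.comp_apply, LinearMap.add_apply, LinearMap.smul_apply, hwdef]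
    have hiw : δ₁ ^ 2 * ⟪S₁inv w, w⟫ + δ₂ ^ 2 * ⟪S₂inv w, w⟫ = lam * ⟪u, w⟫ := by
      have h := congrArg (fun x : V => ⟪x, w⟫) happ'
      simpa [inner_add_left, real_inner_smul_left] using h
    have hz1w : ⟪w, z₁⟫ = ν₁ * ⟪S₁inv w, w⟫ := by
      rw [hz₁def, real_inner_smul_right, real_inner_comm]
    have hz2w : ⟪w, z₂⟫ = ν₂ * ⟪S₂inv w, w⟫ := by
      rw [hz₂def, real_inner_smul_right, real_inner_comm]
    have ha1 : δ₁ ^ 2 * ⟪S₁inv w, w⟫ = ⟪w, z₁⟫ / r ^ 2 := by rw [hz1w, hd1]; ring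
    have hb1 : δ₂ ^ 2 * ⟪S₂inv w, w⟫ = ⟪w, z₂⟫ / r ^ 2 := by rw [hz2w, hd2]; ring
    have h2 : lam * Dv * r ^ 2 = ⟪w, z₁⟫ + ⟪w, z₂⟫ := by
      have h : lam * Dv = (⟪w, z₁⟫ + ⟪w, z₂⟫) / r ^ 2 := by
        rw [← huw, ← hiw, add_div, ← ha1, ← hb1]
      rw [eq_div_iff hr2.ne'] at h
      exact h
    -- bounds
    have hbu := hbound u
    have hμ₁D : (ν₁ + ν₂ / C) * ⟪T₁ u, u⟫ ≤ Dv := by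
      have h : ν₂ / C * ⟪T₁ u, u⟫ ≤ ν₂ * ⟪T₂ u, u⟫ := by
        rw [div_mul_eq_mul_div, div_le_iff₀ hC]
        have := mul_le_mul_of_nonneg_left hbu.2 hν₂.le
        linarith
      rw [hDvdef]; linarith [h]
    have hμ₂D : (ν₁ * c + ν₂) * ⟪T₂ u, u⟫ ≤ Dv := by
      rw [hDvdef]
      have := mul_le_mul_of_nonneg_left hbu.1 hν₁.le
      linarith
    have haL : (ν₁ + ν₂ / C) * Dv ≤ ⟪w, z₁⟫ :=
      inv_form_ge_stmt11 T₁ hT₁sym hT₁nn (ν₁ + ν₂ / C) Dv (by positivity) u z₁ w hz₁ hwu hμ₁D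
    have hbL : (ν₁ * c + ν₂) * Dv ≤ ⟪w, z₂⟫ :=
      inv_form_ge_stmt11 T₂ hT₂sym hT₂nn (ν₁ * c + ν₂) Dv (by positivity) u z₂ w hz₂ hwu hμ₂D
    have hAT₁ : ⟪(S₁ + S₂) z₁, z₁⟫ ≤ (ν₁ + ν₂ / c) * ⟪T₁ z₁, z₁⟫ := by
      rw [hSapply]
      have h : ν₂ * ⟪T₂ z₁, z₁⟫ ≤ ν₂ / c * ⟪T₁ z₁, z₁⟫ := by
        rw [div_mul_eq_mul_div, le_div_iff₀ hc]
        have := mul_le_mul_of_nonneg_left (hbound z₁).1 hν₂.le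
        linarith
      linarith [h]
    have hAT₂ : ⟪(S₁ + S₂) z₂, z₂⟫ ≤ (ν₁ * C + ν₂) * ⟪T₂ z₂, z₂⟫ := by
      rw [hSapply]
      have := mul_le_mul_of_nonneg_left (hbound z₂).2 hν₁.le
      linarith
    have haU : ⟪w, z₁⟫ ≤ (ν₁ + ν₂ / c) * Dv := by
      have := inv_form_le_stmt11 (S₁ + S₂) T₁ hSsym hSnn (ν₁ + ν₂ / c) (by positivity)
        u z₁ w hAu hz₁ hAT₁
      rwa [hwu] at this
    have hbU : ⟪w, z₂⟫ ≤ (ν₁ * C + ν₂) * Dv := by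
      have := inv_form_le_stmt11 (S₁ + S₂) T₂ hSsym hSnn (ν₁ * C + ν₂) (by positivity)
        u z₂ w hAu hz₂ hAT₂
      rwa [hwu] at this
    -- conclude
    have hm1 : msml ≤ 1 / C := min_le_left _ _
    have hm2 : msml ≤ c := min_le_right _ _
    have hM1 : C ≤ Msup := le_max_left _ _
    have hM2 : 1 / c ≤ Msup := le_max_right _ _
    rw [Set.mem_Icc]
    constructor
    · rw [div_le_iff₀ hr2]
      have key : (ν₁ + ν₂) * (msml + 1) * Dv ≤ ⟪w, z₁⟫ + ⟪w, z₂⟫ := by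
        have e1 : ν₁ * msml ≤ ν₁ * c := mul_le_mul_of_nonneg_left hm2 hν₁.le
        have e2 : ν₂ * msml ≤ ν₂ * (1 / C) := mul_le_mul_of_nonneg_left hm1 hν₂.le
        have e1' : 0 ≤ (ν₁ * c - ν₁ * msml) * Dv := mul_nonneg (sub_nonneg.2 e1) hDpos.le
        have e2' : 0 ≤ (ν₂ * (1 / C) - ν₂ * msml) * Dv := mul_nonneg (sub_nonneg.2 e2) hDpos.le
        linear_combination haL + hbL + e1' + e2'
      have : (ν₁ + ν₂) * (msml + 1) * Dv ≤ lam * r ^ 2 * Dv := by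
        rw [show lam * r ^ 2 * Dv = lam * Dv * r ^ 2 by ring, h2]; exact key
      exact le_of_mul_le_mul_right this hDpos
    · rw [le_div_iff₀ hr2]
      have key : ⟪w, z₁⟫ + ⟪w, z₂⟫ ≤ (ν₁ + ν₂) * (Msup + 1) * Dv := by
        have e1 : ν₁ * C ≤ ν₁ * Msup := mul_le_mul_of_nonneg_left hM1 hν₁.le
        have e2 : ν₂ * (1 / c) ≤ ν₂ * Msup := mul_le_mul_of_nonneg_left hM2 hν₂.le
        have e1' : 0 ≤ (ν₁ * Msup - ν₁ * C) * Dv := mul_nonneg (sub_nonneg.2 e1) hDpos.le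
        have e2' : 0 ≤ (ν₂ * Msup - ν₂ * (1 / c)) * Dv := mul_nonneg (sub_nonneg.2 e2) hDpos.le
        linear_combination haU + hbU + e1' + e2'
      have : lam * r ^ 2 * Dv ≤ (ν₁ + ν₂) * (Msup + 1) * Dv := by
        rw [show lam * r ^ 2 * Dv = lam * Dv * r ^ 2 by ring, h2]; exact key
      exact le_of_mul_le_mul_right this hDpos
  · have hne1 : (ν₁ + ν₂ : ℝ) ≠ 0 := by positivity
    have hne2 : (r ^ 2 : ℝ) ≠ 0 := hr2.ne'
    have hne3 : msml + 1 ≠ 0 := by positivity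
    have e : (ν₁ + ν₂) * (Msup + 1) / r ^ 2 / ((ν₁ + ν₂) * (msml + 1) / r ^ 2)
        = (Msup + 1) / (msml + 1) := by
      field_simp
    rw [e]
end

section
/- Let V be a finite-dimensional real inner product space, A, B symmetric positive definite operators on V, and δ_R, δ_B > 0 with δ_R + δ_B = 1. Suppose ⟨(A+B)u,u⟩ ≤ (1 + β)⟨Bu,u⟩ and ⟨(A+B)u,u⟩ ≤ (1 + α)⟨Au,u⟩ for all u, where α, β > 0. Then every eigenvalue λ of (δ_R²A⁻¹ + δ_B²B⁻¹)(A+B) satisfies δ_R² + δ_B² ≤ λ ≤ δ_R²(1+α) + δ_B²(1+β). -/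
/-!
Let `v` be an eigenvector, `w = (A + B) v`, `x = A⁻¹ w` and `y = B⁻¹ w`. Pairing the eigenvalue
equation `δR² x + δB² y = λ v` with `w` gives `λ ⟪w, v⟫ = δR² ⟪A x, x⟫ + δB² ⟪B y, y⟫`, so it
suffices to compare each of `⟪A x, x⟫`, `⟪B y, y⟫` with `⟪w, v⟫`. Both comparisons are
Cauchy–Schwarz for the semi-inner products `⟪A ·, ·⟫` and `⟪(A + B) ·, ·⟫`:
`⟪w, v⟫² = ⟪A v, x⟫² ≤ ⟪A v, v⟫ ⟪A x, x⟫ ≤ ⟪w, v⟫ ⟪A x, x⟫` and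
`⟪A x, x⟫² = ⟪(A + B) v, x⟫² ≤ ⟪w, v⟫ ⟪(A + B) x, x⟫ ≤ (1 + α) ⟪w, v⟫ ⟪A x, x⟫`.
-/

open scoped RealInnerProductSpace

namespace LinearMap

variable {V : Type*} [NormedAddCommGroup V] [InnerProductSpace ℝ V]

theorem isPositive_of_inner_pos {T : V →ₗ[ℝ] V} (hT : T.IsSymmetric)
    (hpos : ∀ u : V, u ≠ 0 → 0 < ⟪T u, u⟫) : T.IsPositive := by
  refine T.isPositive_iff.2 ⟨hT, fun u => ?_⟩
  rcases eq_or_ne u 0 with rfl | hu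
  · simp
  · exact (hpos u hu).le

theorem IsPositive.inner_apply_sq_le {T : V →ₗ[ℝ] V} (hT : T.IsPositive) (u w : V) :
    ⟪T u, w⟫ ^ 2 ≤ ⟪T u, u⟫ * ⟪T w, w⟫ := by
  have hsymm : ⟪T w, u⟫ = ⟪T u, w⟫ := by rw [hT.isSymmetric w u, real_inner_comm]
  have hquad : ∀ t : ℝ, 0 ≤ ⟪T w, w⟫ * (t * t) + (2 * ⟪T u, w⟫) * t + ⟪T u, u⟫ := by
    intro t
    have h := hT.inner_nonneg_left (u + t • w)
    simp only [map_add, map_smul, inner_add_left, inner_add_right, real_inner_smul_left,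
      real_inner_smul_right, hsymm] at h
    linarith
  have hdiscr := discrim_le_zero hquad
  rw [discrim] at hdiscr
  linarith

variable {S M : V →ₗ[ℝ] V} {v x : V}

theorem IsPositive.inner_le_inner_of_apply_eq (hS : S.IsPositive)
    (hSM : ⟪S v, v⟫ ≤ ⟪M v, v⟫) (hx : S x = M v) :
    ⟪M v, v⟫ ≤ ⟪S x, x⟫ := by
  have hcross : ⟪S v, x⟫ = ⟪M v, v⟫ := by
    rw [hS.isSymmetric v x, hx, real_inner_comm]
  have hcs := hS.inner_apply_sq_le v x
  rw [hcross] at hcs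
  have hSv := hS.inner_nonneg_left v
  have hSx := hS.inner_nonneg_left x
  nlinarith [mul_le_mul_of_nonneg_right hSM hSx]

theorem IsPositive.inner_le_mul_inner_of_apply_eq (hM : M.IsPositive) {c : ℝ}
    (hMS : ⟪M x, x⟫ ≤ c * ⟪S x, x⟫) (hx : S x = M v) (hpos : 0 < ⟪S x, x⟫) :
    ⟪S x, x⟫ ≤ c * ⟪M v, v⟫ := by
  have hcross : ⟪M v, x⟫ = ⟪S x, x⟫ := by rw [hx]
  have hcs := hM.inner_apply_sq_le v x
  rw [hcross] at hcs
  have hbound : ⟪S x, x⟫ * ⟪S x, x⟫ ≤ (c * ⟪M v, v⟫) * ⟪S x, x⟫ := by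
    nlinarith [hM.inner_nonneg_left v]
  exact le_of_mul_le_mul_right hbound hpos

end LinearMap

theorem inner_eq_of_smul_add_smul_eq {V : Type*} [NormedAddCommGroup V] [InnerProductSpace ℝ V]
    {S T : V →ₗ[ℝ] V} {v w x y : V} {a b c : ℝ} (hx : S x = w) (hy : T y = w)
    (h : a • x + b • y = c • v) :
    c * ⟪w, v⟫ = a * ⟪S x, x⟫ + b * ⟪T y, y⟫ := by
  have h' := congr(⟪$h, w⟫)
  simp only [inner_add_left, real_inner_smul_left] at h'
  rw [hx, hy, real_inner_comm x, real_inner_comm y, real_inner_comm v, h']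

theorem stmt16_general {V : Type*} [NormedAddCommGroup V] [InnerProductSpace ℝ V]
    (A B Ainv Binv : V →ₗ[ℝ] V)
    (hAsym : LinearMap.IsSymmetric A) (hBsym : LinearMap.IsSymmetric B)
    (hApos : ∀ u : V, u ≠ 0 → 0 < ⟪A u, u⟫)
    (hBpos : ∀ u : V, u ≠ 0 → 0 < ⟪B u, u⟫)
    (hAi : A ∘ₗ Ainv = LinearMap.id ∧ Ainv ∘ₗ A = LinearMap.id)
    (hBi : B ∘ₗ Binv = LinearMap.id ∧ Binv ∘ₗ B = LinearMap.id)
    (δR δB : ℝ)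
    (α β : ℝ)
    (hβbound : ∀ u : V, ⟪(A + B) u, u⟫ ≤ (1 + β) * ⟪B u, u⟫)
    (hαbound : ∀ u : V, ⟪(A + B) u, u⟫ ≤ (1 + α) * ⟪A u, u⟫) :
    ∀ lam : ℝ,
      Module.End.HasEigenvalue ((δR ^ 2 • Ainv + δB ^ 2 • Binv) ∘ₗ (A + B)) lam →
      δR ^ 2 + δB ^ 2 ≤ lam ∧ lam ≤ δR ^ 2 * (1 + α) + δB ^ 2 * (1 + β) := by
  intro lam hlam
  obtain ⟨v, hv⟩ := hlam.exists_hasEigenvector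
  have hA := LinearMap.isPositive_of_inner_pos hAsym hApos
  have hB := LinearMap.isPositive_of_inner_pos hBsym hBpos
  set w := (A + B) v
  have hAx : A (Ainv w) = w := congr($(hAi.1) w)
  have hBy : B (Binv w) = w := congr($(hBi.1) w)
  have hq : 0 < ⟪w, v⟫ := by
    simpa [w, inner_add_left] using add_pos (hApos v hv.2) (hBpos v hv.2)
  have heig := inner_eq_of_smul_add_smul_eq hAx hBy hv.apply_eq_smul
  have hAv : ⟪A v, v⟫ ≤ ⟪w, v⟫ := by simpa [w, inner_add_left] using hB.inner_nonneg_left v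
  have hBv : ⟪B v, v⟫ ≤ ⟪w, v⟫ := by simpa [w, inner_add_left] using hA.inner_nonneg_left v
  have hx_ge := hA.inner_le_inner_of_apply_eq hAv hAx
  have hy_ge := hB.inner_le_inner_of_apply_eq hBv hBy
  have hx_le := (hA.add hB).inner_le_mul_inner_of_apply_eq (hαbound _) hAx (hq.trans_le hx_ge)
  have hy_le := (hA.add hB).inner_le_mul_inner_of_apply_eq (hβbound _) hBy (hq.trans_le hy_ge)
  constructor
  · refine le_of_mul_le_mul_right ?_ hq
    nlinarith [sq_nonneg δR, sq_nonneg δB]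
  · refine le_of_mul_le_mul_right ?_ hq
    nlinarith [sq_nonneg δR, sq_nonneg δB]

theorem stmt16 {V : Type*} [NormedAddCommGroup V] [InnerProductSpace ℝ V]
    [FiniteDimensional ℝ V]
    (A B Ainv Binv : V →ₗ[ℝ] V)
    (hAsym : LinearMap.IsSymmetric A) (hBsym : LinearMap.IsSymmetric B)
    (hApos : ∀ u : V, u ≠ 0 → 0 < ⟪A u, u⟫)
    (hBpos : ∀ u : V, u ≠ 0 → 0 < ⟪B u, u⟫)
    (hAi : A ∘ₗ Ainv = LinearMap.id ∧ Ainv ∘ₗ A = LinearMap.id)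
    (hBi : B ∘ₗ Binv = LinearMap.id ∧ Binv ∘ₗ B = LinearMap.id)
    (δR δB : ℝ) (hδR : 0 < δR) (hδB : 0 < δB) (hsum : δR + δB = 1)
    (α β : ℝ) (hα : 0 < α) (hβ : 0 < β)
    (hβbound : ∀ u : V, ⟪(A + B) u, u⟫ ≤ (1 + β) * ⟪B u, u⟫)
    (hαbound : ∀ u : V, ⟪(A + B) u, u⟫ ≤ (1 + α) * ⟪A u, u⟫) :
    ∀ lam : ℝ,
      Module.End.HasEigenvalue ((δR ^ 2 • Ainv + δB ^ 2 • Binv) ∘ₗ (A + B)) lam →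
      δR ^ 2 + δB ^ 2 ≤ lam ∧ lam ≤ δR ^ 2 * (1 + α) + δB ^ 2 * (1 + β) :=
  stmt16_general A B Ainv Binv hAsym hBsym hApos hBpos hAi hBi δR δB α β hβbound hαbound
end
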